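/- arXiv:2108.01825 — 3 statements merged into one kernel-verified Lean document; each statement's English description precedes it below -/
import Mathlib

section
/- Let Q: ℝ → ℝ be strictly increasing with Q(0) = 0, skew-symmetric, and convex on [0,∞). Let p₁,...,pₙ ≥ 0 with Σpᵢ = 1, and let a, b, c ∈ ℝⁿ be utility vectors. If (aᵢ ≥ bᵢ for all i with strict inequality at some i with pᵢ > 0) and Σᵢ pᵢ Q(bᵢ - cᵢ) ≥ 0, then Σᵢ pᵢ Q(aᵢ - cᵢ) > 0. -/
theorem stmt_3 (n : ℕ) (Q : ℝ → ℝ) (hQ : StrictMono Q) (hQ0 : Q 0 = 0)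
    (hskew : ∀ x : ℝ, Q (-x) = -Q x) (hconv : ConvexOn ℝ (Set.Ici (0:ℝ)) Q)
    (p a b c : Fin n → ℝ) (hp : ∀ i, 0 ≤ p i) (hsum : ∑ i, p i = 1)
    (hab : ∀ i, b i ≤ a i) (i : Fin n) (hpi : 0 < p i) (hi : b i < a i)
    (hbc : 0 ≤ ∑ j, p j * Q (b j - c j)) :
    0 < ∑ j, p j * Q (a j - c j) := by
  have hlt : ∑ j, p j * Q (b j - c j) < ∑ j, p j * Q (a j - c j) := by
    apply Finset.sum_lt_sum
    · intro j _
      exact mul_le_mul_of_nonneg_left (hQ.monotone (by linarith [hab j])) (hp j)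
    · exact ⟨i, Finset.mem_univ i, by
        exact mul_lt_mul_of_pos_left (hQ (by linarith)) hpi⟩
  linarith
end

section
/- Let Q: ℝ → ℝ be strictly increasing, skew-symmetric, Q(0) = 0, convex on [0,∞). Suppose 0 < A < B (where A = v·u(f₁) with v ∈ (0,1), B = u(g₁)) and u(f₁) > B > 0, λ ∈ (0,1), p ∈ (0,1]. Define Ψ = p{λQ(A) − Q(B) + λp[Q(A−B) − Q(A) + Q(B)]} and Φ = p{λQ(u(f₁)) − Q(B) + λp[Q(u(f₁)−B) − Q(u(f₁)) + Q(B)]}. Then Ψ − Φ < 0, i.e., Ψ < Φ. -/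
theorem stmt_12 (Q : ℝ → ℝ) (hQ : StrictMono Q) (hQ0 : Q 0 = 0)
    (hskew : ∀ x : ℝ, Q (-x) = -Q x)
    (hconv : ConvexOn ℝ (Set.Ici (0:ℝ)) Q)
    (A B uf lam p : ℝ) (hA : 0 < A) (hAB : A < B) (hB : B < uf)
    (hlam : lam ∈ Set.Ioo (0:ℝ) 1) (hp : p ∈ Set.Ioc (0:ℝ) 1) :
    p * (lam * Q A - Q B + lam * p * (Q (A - B) - Q A + Q B)) -
      p * (lam * Q uf - Q B + lam * p * (Q (uf - B) - Q uf + Q B)) < 0 := by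
  obtain ⟨hl0, hl1⟩ := hlam
  obtain ⟨hp0, hp1⟩ := hp
  have h1 : Q A < Q uf := hQ (hAB.trans hB)
  have h2 : Q (A - B) < Q (uf - B) := hQ (by linarith)
  nlinarith [mul_pos hp0 hl0, mul_pos (mul_pos hp0 hl0) hp0,
    mul_lt_mul_of_pos_left h2 (mul_pos (mul_pos hp0 hl0) hp0),
    mul_lt_mul_of_pos_left h1 (mul_pos hp0 hl0)]
end

section
/- Let Q: ℝ → ℝ be strictly increasing, skew-symmetric, Q(0)=0, convex on [0,∞). Suppose B < A < 0 (where A = v·u(f₁), B = u(g₁)) and u(f₁) < B < 0, λ ∈ (0,1), p ∈ (0,1]. Define Ψ = p{λQ(A) − Q(B) + λp[Q(A−B) − Q(A) + Q(B)]} and Φ = p{λQ(u(f₁)) − Q(B) + λp[Q(u(f₁)−B) − Q(u(f₁)) + Q(B)]}. Then Φ − Ψ < 0, i.e., Ψ > Φ. -/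
theorem stmt_15 (Q : ℝ → ℝ) (hQ : StrictMono Q) (hQ0 : Q 0 = 0)
    (hskew : ∀ x : ℝ, Q (-x) = -Q x)
    (hconv : ConvexOn ℝ (Set.Ici (0:ℝ)) Q)
    (A B uf lam p : ℝ) (hBA : B < A) (hA : A < 0) (hB : uf < B)
    (hlam : lam ∈ Set.Ioo (0:ℝ) 1) (hp : p ∈ Set.Ioc (0:ℝ) 1) :
    p * (lam * Q uf - Q B + lam * p * (Q (uf - B) - Q uf + Q B)) -
      p * (lam * Q A - Q B + lam * p * (Q (A - B) - Q A + Q B)) < 0 := by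
  obtain ⟨hl0, hl1⟩ := hlam
  obtain ⟨hp0, hp1⟩ := hp
  have h1 : Q uf < Q A := hQ (hB.trans hBA)
  have h2 : Q (uf - B) < Q (A - B) := hQ (by linarith)
  nlinarith [mul_pos hp0 hl0, mul_pos (mul_pos hp0 hp0) hl0,
    mul_pos (mul_pos hp0 hl0) (sub_pos.2 h2),
    mul_nonneg (mul_nonneg hp0.le hl0.le) (mul_nonneg (sub_nonneg.2 hp1) (sub_pos.2 h1).le)]
end
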